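/- As x → ∞, logit(Φ(x))/x² converges to 1/2. -/

import Mathlib

open Filter Set

/-- The standard normal cumulative distribution function. -/
noncomputable def Phi (x : ℝ) : ℝ :=
  (2 * Real.pi) ^ (-(1 : ℝ) / 2) * ∫ t in Set.Iic x, Real.exp (-t ^ 2 / 2)

/-- The logit function, `logit x = log x - log (1 - x)`. -/
noncomputable def logit (x : ℝ) : ℝ := Real.log x - Real.log (1 - x)

section Aux
open MeasureTheory Real

lemma f_eq : (fun t : ℝ => Real.exp (-t ^ 2 / 2)) = fun t => Real.exp (-(1/2 : ℝ) * t ^ 2) := by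
  funext t; ring_nf

lemma integrable_f : Integrable (fun t : ℝ => Real.exp (-t ^ 2 / 2)) := by
  rw [f_eq]; exact integrable_exp_neg_mul_sq (by norm_num)

lemma total_integral : (∫ t : ℝ, Real.exp (-t ^ 2 / 2)) = Real.sqrt (2 * Real.pi) := by
  rw [f_eq, integral_gaussian]
  norm_num [mul_comm]

lemma c_pos : 0 < (2 * Real.pi) ^ (-(1 : ℝ) / 2) :=
  Real.rpow_pos_of_pos (by positivity) _

lemma c_mul_sqrt : (2 * Real.pi) ^ (-(1 : ℝ) / 2) * Real.sqrt (2 * Real.pi) = 1 := by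
  rw [Real.sqrt_eq_rpow, ← Real.rpow_add (by positivity)]
  norm_num

lemma tendsto_Iic_integral :
    Tendsto (fun x : ℝ => ∫ t in Set.Iic x, Real.exp (-t ^ 2 / 2)) atTop
      (nhds (Real.sqrt (2 * Real.pi))) := by
  rw [← total_integral]
  exact (MeasureTheory.aecover_Iic tendsto_id).integral_tendsto_of_countably_generated integrable_f

lemma tendsto_Phi : Tendsto Phi atTop (nhds 1) := by
  rw [← c_mul_sqrt]
  exact tendsto_Iic_integral.const_mul _

lemma Iic_integral_pos (x : ℝ) : 0 < ∫ t in Set.Iic x, Real.exp (-t ^ 2 / 2) := by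
  rw [setIntegral_pos_iff_support_of_nonneg_ae
    (Eventually.of_forall fun t => (Real.exp_pos _).le) integrable_f.integrableOn]
  have : Function.support (fun t : ℝ => Real.exp (-t ^ 2 / 2)) = Set.univ := by
    ext t; simp [Real.exp_ne_zero]
  rw [this, Set.univ_inter, Real.volume_Iic]
  exact ENNReal.zero_lt_top

lemma Ioi_integral_pos (x : ℝ) : 0 < ∫ t in Set.Ioi x, Real.exp (-t ^ 2 / 2) := by
  rw [setIntegral_pos_iff_support_of_nonneg_ae
    (Eventually.of_forall fun t => (Real.exp_pos _).le) integrable_f.integrableOn]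
  have : Function.support (fun t : ℝ => Real.exp (-t ^ 2 / 2)) = Set.univ := by
    ext t; simp [Real.exp_ne_zero]
  rw [this, Set.univ_inter, Real.volume_Ioi]
  exact ENNReal.zero_lt_top

lemma one_sub_Phi (x : ℝ) :
    1 - Phi x = (2 * Real.pi) ^ (-(1 : ℝ) / 2) * ∫ t in Set.Ioi x, Real.exp (-t ^ 2 / 2) := by
  have h := intervalIntegral.integral_Iic_add_Ioi (b := x) integrable_f.integrableOn
    integrable_f.integrableOn
  rw [total_integral] at h
  rw [Phi]
  linear_combination (-1 : ℝ) * c_mul_sqrt - (2 * Real.pi) ^ (-(1 : ℝ) / 2) * h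

lemma Phi_pos (x : ℝ) : 0 < Phi x := mul_pos c_pos (Iic_integral_pos x)

lemma Phi_lt_one (x : ℝ) : Phi x < 1 := by
  have := mul_pos c_pos (Ioi_integral_pos x)
  rw [← one_sub_Phi] at this; linarith
lemma integrable_tf : Integrable (fun t : ℝ => t * Real.exp (-t ^ 2 / 2)) := by
  have : (fun t : ℝ => t * Real.exp (-t ^ 2 / 2))
      = fun t => t * Real.exp (-(1/2 : ℝ) * t ^ 2) := by
    funext t; ring_nf
  rw [this]; exact integrable_mul_exp_neg_mul_sq (by norm_num)

lemma moment_integral (x : ℝ) :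
    ∫ t in Set.Ioi x, t * Real.exp (-t ^ 2 / 2) = Real.exp (-x ^ 2 / 2) := by
  have hderiv : ∀ t ∈ Set.Ici x,
      HasDerivAt (fun t : ℝ => -Real.exp (-t ^ 2 / 2)) (t * Real.exp (-t ^ 2 / 2)) t := by
    intro t _
    have h1 : HasDerivAt (fun t : ℝ => -t ^ 2 / 2) (-t) t := by
      have := ((hasDerivAt_pow 2 t).neg).div_const 2
      simpa using this.congr_deriv (by push_cast; ring)
    have := (h1.exp).neg
    exact this.congr_deriv (by ring)
  have htend : Tendsto (fun t : ℝ => -Real.exp (-t ^ 2 / 2)) atTop (nhds 0) := by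
    rw [show (0:ℝ) = -0 by norm_num]
    refine Tendsto.neg ?_
    refine Real.tendsto_exp_atBot.comp ?_
    have : Tendsto (fun t : ℝ => t ^ 2 / 2) atTop atTop :=
      (tendsto_pow_atTop two_ne_zero).atTop_div_const (by norm_num)
    have h2 := tendsto_neg_atTop_atBot.comp this
    refine h2.congr fun t => ?_
    simp [Function.comp]
    ring
  have := integral_Ioi_of_hasDerivAt_of_tendsto' hderiv integrable_tf.integrableOn htend
  rw [this]; ring
lemma upper_bound {x : ℝ} (hx : 0 < x) :
    ∫ t in Set.Ioi x, Real.exp (-t ^ 2 / 2) ≤ Real.exp (-x ^ 2 / 2) / x := by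
  have h1 : ∫ t in Set.Ioi x, Real.exp (-t ^ 2 / 2)
      ≤ ∫ t in Set.Ioi x, (t / x) * Real.exp (-t ^ 2 / 2) := by
    refine setIntegral_mono_on integrable_f.integrableOn ?_ measurableSet_Ioi ?_
    · have : (fun t : ℝ => (t / x) * Real.exp (-t ^ 2 / 2))
          = fun t => x⁻¹ * (t * Real.exp (-t ^ 2 / 2)) := by
        funext t; ring
      rw [this]
      exact (integrable_tf.integrableOn).const_mul _
    · intro t ht
      have h1x : (1 : ℝ) ≤ t / x := (one_le_div hx).mpr (le_of_lt ht)
      nlinarith [Real.exp_pos (-t ^ 2 / 2)]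
  have h2 : ∫ t in Set.Ioi x, (t / x) * Real.exp (-t ^ 2 / 2)
      = Real.exp (-x ^ 2 / 2) / x := by
    have : (fun t : ℝ => (t / x) * Real.exp (-t ^ 2 / 2))
        = fun t => x⁻¹ * (t * Real.exp (-t ^ 2 / 2)) := by
      funext t; ring
    rw [this, MeasureTheory.integral_const_mul, moment_integral]
    ring
  linarith

lemma lower_bound {x : ℝ} (hx : 0 ≤ x) :
    Real.exp (-(x + 1) ^ 2 / 2) ≤ ∫ t in Set.Ioi x, Real.exp (-t ^ 2 / 2) := by
  have h1 : Real.exp (-(x + 1) ^ 2 / 2) * (volume (Set.Ioc x (x + 1))).toReal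
      ≤ ∫ t in Set.Ioc x (x + 1), Real.exp (-t ^ 2 / 2) := by
    refine setIntegral_ge_of_const_le_real measurableSet_Ioc ?_ ?_ integrable_f.integrableOn
    · rw [Real.volume_Ioc]; exact ENNReal.ofReal_ne_top
    · intro t ht
      apply Real.exp_le_exp.mpr
      have h0 : 0 < t := lt_of_le_of_lt hx ht.1
      nlinarith [ht.2]
  rw [Real.volume_Ioc] at h1
  simp only [add_sub_cancel_left, ENNReal.toReal_ofReal zero_le_one, mul_one] at h1
  refine le_trans h1 (setIntegral_mono_set integrable_f.integrableOn
    (Eventually.of_forall fun t => (Real.exp_pos _).le) (HasSubset.Subset.eventuallyLE ?_))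
  exact Set.Ioc_subset_Ioi_self

lemma h_log_Phi : Tendsto (fun x : ℝ => Real.log (Phi x) / x ^ 2) atTop (nhds 0) := by
  have ha : Tendsto (fun x => Real.log (Phi x)) atTop (nhds 0) := by
    have := (Real.continuousAt_log one_ne_zero).tendsto.comp tendsto_Phi
    simpa [Function.comp_def] using this
  have hb : Tendsto (fun x : ℝ => (x ^ 2)⁻¹) atTop (nhds 0) :=
    (tendsto_pow_atTop two_ne_zero).inv_tendsto_atTop
  simpa [div_eq_mul_inv] using ha.mul hb

set_option maxHeartbeats 1000000 in
lemma h_mill : Tendsto (fun x : ℝ => -Real.log (1 - Phi x) / x ^ 2) atTop (nhds (1 / 2)) := by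
  obtain ⟨L, hL⟩ : ∃ L : ℝ, L = Real.log ((2 * Real.pi) ^ (-(1 : ℝ) / 2)) := ⟨_, rfl⟩
  have hlo : Tendsto (fun x : ℝ => (x ^ 2 / 2 - L) / x ^ 2) atTop (nhds (1 / 2)) := by
    have : Tendsto (fun x : ℝ => 1 / 2 - L * (x ^ 2)⁻¹) atTop (nhds (1 / 2)) := by
      have hb : Tendsto (fun x : ℝ => (x ^ 2)⁻¹) atTop (nhds 0) :=
        (tendsto_pow_atTop two_ne_zero).inv_tendsto_atTop
      simpa using tendsto_const_nhds.sub (hb.const_mul L)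
    refine Tendsto.congr' ?_ this
    filter_upwards [eventually_gt_atTop 0] with x hx
    have hx2 : (x:ℝ) ^ 2 ≠ 0 := by positivity
    field_simp
  have hhi : Tendsto (fun x : ℝ => ((x + 1) ^ 2 / 2 - L) / x ^ 2) atTop (nhds (1 / 2)) := by
    have hb : Tendsto (fun x : ℝ => (x ^ 2)⁻¹) atTop (nhds 0) :=
      (tendsto_pow_atTop two_ne_zero).inv_tendsto_atTop
    have hc : Tendsto (fun x : ℝ => x⁻¹) atTop (nhds 0) := tendsto_inv_atTop_zero
    have : Tendsto (fun x : ℝ => 1 / 2 + x⁻¹ + (1 / 2 - L) * (x ^ 2)⁻¹) atTop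
        (nhds (1 / 2)) := by
      simpa using (tendsto_const_nhds.add hc).add (hb.const_mul (1 / 2 - L))
    refine Tendsto.congr' ?_ this
    filter_upwards [eventually_gt_atTop 0] with x hx
    have hx2 : (x:ℝ) ^ 2 ≠ 0 := by positivity
    field_simp
    ring
  refine tendsto_of_tendsto_of_tendsto_of_le_of_le' hlo hhi ?_ ?_
  · filter_upwards [eventually_ge_atTop 1] with x hx1
    have hx : (0:ℝ) < x := lt_of_lt_of_le one_pos hx1
    have hJ := Ioi_integral_pos x
    have hlogJ : Real.log (∫ t in Set.Ioi x, Real.exp (-t ^ 2 / 2)) ≤ -x ^ 2 / 2 := by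
      have h1 := Real.log_le_log hJ (upper_bound hx)
      rw [Real.log_div (Real.exp_ne_zero _) (ne_of_gt hx), Real.log_exp] at h1
      have := Real.log_nonneg hx1
      linarith
    rw [one_sub_Phi, Real.log_mul (ne_of_gt c_pos) (ne_of_gt hJ), ← hL]
    gcongr
    linarith
  · filter_upwards [eventually_ge_atTop 1] with x hx1
    have hx : (0:ℝ) ≤ x := le_trans zero_le_one hx1
    have hJ := Ioi_integral_pos x
    have hlogJ : -(x + 1) ^ 2 / 2 ≤ Real.log (∫ t in Set.Ioi x, Real.exp (-t ^ 2 / 2)) := by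
      have h1 := Real.log_le_log (Real.exp_pos _) (lower_bound hx)
      rwa [Real.log_exp] at h1
    rw [one_sub_Phi, Real.log_mul (ne_of_gt c_pos) (ne_of_gt hJ), ← hL]
    gcongr
    linarith

end Aux

theorem logit_Phi_quadratic_growth :
    Tendsto (fun x : ℝ => logit (Phi x) / x ^ 2) atTop (nhds (1 / 2)) := by
  have h := h_log_Phi.add h_mill
  rw [zero_add] at h
  exact h.congr fun x => by rw [logit]; ring
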